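/- Let M be a CPTP map with Kraus decomposition M(ρ) = Σᵢ Mᵢ ρ Mᵢ†, let ω ∈ ℂ with |ω| = 1, and let A have polar decomposition A = U|A|. Then M(A) = ω A if and only if |A| is a fixed point of M and Mᵢ U |A| = ω U Mᵢ |A| for all i. -/

import Mathlib

open Matrix
open scoped ComplexOrder

noncomputable section

abbrev Mat (d : ℕ) := Matrix (Fin d) (Fin d) ℂ

/-- The positive semidefinite square root (the removed Mathlib `Matrix.PosSemidef.sqrt`,
restated with its old definition). -/
def Matrix.PosSemidef.sqrt {n 𝕜 : Type*} [Fintype n] [DecidableEq n] [RCLike 𝕜]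
    {A : Matrix n n 𝕜} (hA : A.PosSemidef) : Matrix n n 𝕜 :=
  hA.1.eigenvectorUnitary.1 * diagonal ((↑) ∘ (√·) ∘ hA.1.eigenvalues) *
  (star hA.1.eigenvectorUnitary : Matrix n n 𝕜)

/-- `K` is a Kraus representation of the linear map `Φ`. -/
def IsKrausRep {d : ℕ} (Φ : Mat d →ₗ[ℂ] Mat d) {n : ℕ} (K : Fin n → Mat d) : Prop :=
  (∀ A, Φ A = ∑ i, K i * A * (K i)ᴴ) ∧ ∑ i, (K i)ᴴ * K i = 1

/-- A quantum channel: completely positive trace-preserving map, i.e. admitting a Kraus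
representation with the normalization condition. -/
def IsCPTP {d : ℕ} (Φ : Mat d →ₗ[ℂ] Mat d) : Prop :=
  ∃ (n : ℕ) (K : Fin n → Mat d), IsKrausRep Φ K

/-- A density matrix: positive semidefinite with unit trace. -/
def IsDensity {d : ℕ} (ρ : Mat d) : Prop := ρ.PosSemidef ∧ ρ.trace = 1

/-- Ergodicity: the channel has a unique fixed point density matrix. -/
def IsErgodic {d : ℕ} (Φ : Mat d →ₗ[ℂ] Mat d) : Prop :=
  ∃! ρ : Mat d, IsDensity ρ ∧ Φ ρ = ρ

/-- The support of an operator, viewed as a subspace of `ℂ^d`. -/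
def supp {d : ℕ} (ρ : Mat d) : Submodule ℂ (Fin d → ℂ) := LinearMap.range ρ.mulVecLin

/-- The trace norm `‖A‖₁ = Tr √(A†A)`. -/
def traceNorm {d : ℕ} (A : Mat d) : ℝ :=
  ((Matrix.PosSemidef.sqrt (Matrix.posSemidef_conjTranspose_mul_self A)).trace).re

/-- Mixing: iterates of the channel converge in trace norm to a unique state. -/
def IsMixing {d : ℕ} (Φ : Mat d →ₗ[ℂ] Mat d) : Prop :=
  ∃ ρs : Mat d, IsDensity ρs ∧ ∀ ρ : Mat d, IsDensity ρ →
    Filter.Tendsto (fun k : ℕ => traceNorm ((Φ ^ k) ρ - ρs)) Filter.atTop (nhds 0)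

/-- A subspace `S` is invariant for a channel if every Kraus operator (of any Kraus
representation) maps `S` into itself. -/
def IsInvariantSubspace {d : ℕ} (Φ : Mat d →ₗ[ℂ] Mat d) (S : Submodule ℂ (Fin d → ℂ)) : Prop :=
  ∀ (n : ℕ) (K : Fin n → Mat d), IsKrausRep Φ K → ∀ i, ∀ x ∈ S, (K i).mulVec x ∈ S

/-! Write `Dᵢ = Mᵢ U - ω U Mᵢ`. Expanding `∑ᵢ Dᵢ |A| Dᵢ†` and using `M(U|A|) = ω U|A|`, its
adjoint `M(|A|U†) = ω̄ |A|U†` and trace preservation, its trace is `(1 - |ω|²) tr |A| = 0`. Each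
summand is positive semidefinite, so every `Dᵢ |A|` vanishes, which is the intertwining relation;
summing `Mᵢ U |A| Mᵢ† = ω U Mᵢ |A| Mᵢ†` over `i` then gives `ω U M(|A|) = ω U |A|`, and
conversely. -/

namespace Matrix

variable {m k 𝕜 : Type*} [Fintype m] [Fintype k] [RCLike 𝕜]

theorem PosSemidef.posSemidef_sqrt [DecidableEq m] {A : Matrix m m 𝕜} (hA : A.PosSemidef) :
    hA.sqrt.PosSemidef := by
  have hD : (diagonal ((RCLike.ofReal : ℝ → 𝕜) ∘ (√·) ∘ hA.1.eigenvalues)).PosSemidef :=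
    posSemidef_diagonal_iff.mpr fun i => by simp [RCLike.ofReal_nonneg, Real.sqrt_nonneg]
  simpa [PosSemidef.sqrt, star_eq_conjTranspose] using
    hD.mul_mul_conjTranspose_same (hA.1.eigenvectorUnitary : Matrix m m 𝕜)

open scoped MatrixOrder in
theorem PosSemidef.mul_eq_zero_of_trace_mul_mul_conjTranspose_eq_zero {P : Matrix m m 𝕜}
    (hP : P.PosSemidef) {D : Matrix k m 𝕜} (h : (D * P * Dᴴ).trace = 0) : D * P = 0 := by
  classical
  obtain ⟨B, rfl⟩ := CStarAlgebra.nonneg_iff_eq_star_mul_self.mp hP.nonneg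
  have hBD : B * Dᴴ = 0 := by
    rw [← trace_conjTranspose_mul_self_eq_zero_iff, conjTranspose_mul, conjTranspose_conjTranspose]
    rwa [star_eq_conjTranspose, ← Matrix.mul_assoc, Matrix.mul_assoc _ B] at h
  rw [star_eq_conjTranspose, ← Matrix.mul_assoc, ← conjTranspose_conjTranspose D,
    ← conjTranspose_mul, hBD, conjTranspose_zero, Matrix.zero_mul]

end Matrix

section Kraus

variable {m ι 𝕜 : Type*} [Fintype m] [Fintype ι] [RCLike 𝕜] (K : ι → Matrix m m 𝕜)

def krausMap (X : Matrix m m 𝕜) : Matrix m m 𝕜 := ∑ i, K i * X * (K i)ᴴ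

theorem trace_krausMap [DecidableEq m] (hK : ∑ i, (K i)ᴴ * K i = 1) (X : Matrix m m 𝕜) :
    (krausMap K X).trace = X.trace := by
  simp_rw [krausMap, trace_sum, fun i => trace_mul_cycle (K i) X (K i)ᴴ, ← trace_sum,
    ← Finset.sum_mul, hK, Matrix.one_mul]

theorem krausMap_conjTranspose (X : Matrix m m 𝕜) : krausMap K Xᴴ = (krausMap K X)ᴴ := by
  simp [krausMap, conjTranspose_sum, conjTranspose_mul, Matrix.mul_assoc]

variable {K}

theorem krausMap_mul_eq_smul_mul_krausMap {U P : Matrix m m 𝕜} {ω : 𝕜}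
    (h : ∀ i, K i * U * P = ω • (U * (K i * P))) :
    krausMap K (U * P) = ω • (U * krausMap K P) := by
  simp_rw [krausMap, ← Matrix.mul_assoc, h, smul_mul, Matrix.mul_sum, Finset.smul_sum,
    Matrix.mul_assoc]

variable (K)

theorem sum_mul_mul_conjTranspose_sub_smul (U P : Matrix m m 𝕜) (ω : 𝕜) :
    ∑ i, (K i * U - ω • (U * K i)) * P * (K i * U - ω • (U * K i))ᴴ =
      krausMap K (U * P * Uᴴ) - star ω • (krausMap K (U * P) * Uᴴ)
        - ω • (U * krausMap K (P * Uᴴ)) + (ω * star ω) • (U * krausMap K P * Uᴴ) := by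
  simp only [krausMap, Matrix.mul_sum, Matrix.sum_mul, Finset.smul_sum, ← Finset.sum_sub_distrib,
    ← Finset.sum_add_distrib]
  refine Finset.sum_congr rfl fun i _ => ?_
  simp only [conjTranspose_sub, conjTranspose_smul, conjTranspose_mul, sub_mul, mul_sub,
    Matrix.smul_mul, Matrix.mul_smul, smul_smul, Matrix.mul_assoc]
  module

variable [DecidableEq m] {K}

theorem trace_sum_mul_mul_conjTranspose_sub_smul (hK : ∑ i, (K i)ᴴ * K i = 1)
    {U P : Matrix m m 𝕜} (hU : Uᴴ * U = 1) (hP : P.IsHermitian) {ω : 𝕜}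
    (h : krausMap K (U * P) = ω • (U * P)) :
    (∑ i, (K i * U - ω • (U * K i)) * P * (K i * U - ω • (U * K i))ᴴ).trace =
      (1 - ω * star ω) * P.trace := by
  have hPU : krausMap K (P * Uᴴ) = star ω • (P * Uᴴ) := by
    rw [← hP.eq, ← conjTranspose_mul, krausMap_conjTranspose, h, conjTranspose_smul,
      conjTranspose_mul, hP.eq]
  have hconj (X : Matrix m m 𝕜) : (U * X * Uᴴ).trace = X.trace := by
    rw [trace_mul_cycle, hU, Matrix.one_mul]
  rw [sum_mul_mul_conjTranspose_sub_smul, hPU, h]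
  simp only [trace_add, trace_sub, trace_smul, trace_krausMap K hK, Matrix.smul_mul,
    Matrix.mul_smul, ← Matrix.mul_assoc, hconj, smul_eq_mul]
  ring

theorem intertwine_of_krausMap_mul_eq_smul (hK : ∑ i, (K i)ᴴ * K i = 1)
    {U P : Matrix m m 𝕜} (hU : Uᴴ * U = 1) (hP : P.PosSemidef) {ω : 𝕜} (hω : ‖ω‖ = 1)
    (h : krausMap K (U * P) = ω • (U * P)) (i : ι) :
    K i * U * P = ω • (U * (K i * P)) := by
  have hω_mul_conj : ω * star ω = 1 := by
    rw [RCLike.star_def, RCLike.mul_conj, hω]; norm_num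
  have hsum := trace_sum_mul_mul_conjTranspose_sub_smul hK hU hP.1 h
  rw [hω_mul_conj, sub_self, zero_mul, trace_sum] at hsum
  have hterm := (Finset.sum_eq_zero_iff_of_nonneg fun j _ =>
    (hP.mul_mul_conjTranspose_same _).trace_nonneg).mp hsum i (Finset.mem_univ i)
  have := hP.mul_eq_zero_of_trace_mul_mul_conjTranspose_eq_zero hterm
  rwa [sub_mul, sub_eq_zero, Matrix.smul_mul, Matrix.mul_assoc U] at this

theorem krausMap_mul_eq_smul_iff (hK : ∑ i, (K i)ᴴ * K i = 1)
    {U P : Matrix m m 𝕜} (hU : Uᴴ * U = 1) (hP : P.PosSemidef) {ω : 𝕜} (hω : ‖ω‖ = 1) :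
    krausMap K (U * P) = ω • (U * P) ↔
      krausMap K P = P ∧ ∀ i, K i * U * P = ω • (U * (K i * P)) := by
  refine ⟨fun h => ?_, fun ⟨hfix, hint⟩ => by rw [krausMap_mul_eq_smul_mul_krausMap hint, hfix]⟩
  have hint := intertwine_of_krausMap_mul_eq_smul hK hU hP hω h
  have hω0 : ω ≠ 0 := by rintro rfl; simp at hω
  refine ⟨?_, hint⟩
  have := (krausMap_mul_eq_smul_mul_krausMap hint).symm.trans h
  simpa [← Matrix.mul_assoc, hU] using congrArg (Uᴴ * ·) (smul_right_injective _ hω0 this)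

end Kraus

/-- Peripheral eigenvectors of quantum channels: `A = U|A|` (polar decomposition) satisfies
`Φ A = ω A` with `|ω| = 1` iff `|A|` is a fixed point of `Φ` and `Mᵢ U |A| = ω U Mᵢ |A|` for
every Kraus operator. -/
theorem peripheral_eigenvector_characterization {d n : ℕ} (Φ : Mat d →ₗ[ℂ] Mat d)
    (K : Fin n → Mat d) (hK : IsKrausRep Φ K)
    (ω : ℂ) (hω : ‖ω‖ = 1) (A U absA : Mat d)
    (hU : U ∈ Matrix.unitaryGroup (Fin d) ℂ)
    (habs : absA = Matrix.PosSemidef.sqrt (Matrix.posSemidef_conjTranspose_mul_self A))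
    (hpolar : A = U * absA) :
    Φ A = ω • A ↔ (Φ absA = absA ∧ ∀ i, K i * U * absA = ω • (U * (K i * absA))) := by
  obtain ⟨hΦ, hnorm⟩ := hK
  have hU' : Uᴴ * U = 1 := Matrix.mem_unitaryGroup_iff'.mp hU
  have hP : absA.PosSemidef := habs ▸ (posSemidef_conjTranspose_mul_self A).posSemidef_sqrt
  rw [hΦ, hΦ, hpolar]
  exact krausMap_mul_eq_smul_iff hnorm hU' hP hω
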